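/- arXiv:2004.02468 — 2 statements merged into one kernel-verified Lean document; each statement's English description precedes it below -/
import Mathlib

section
/- Let s ≥ 1 be an integer and let Φ : ℝ → ℂ be a complex trigonometric polynomial of degree at most N. For 0 ≤ m ≤ s let e_m(t) denote the m-th elementary symmetric polynomial of the s values Φ(t/s), Φ((t+2π)/s), …, Φ((t+2π(s−1))/s). Then each e_m is a complex trigonometric polynomial in t of degree at most ⌊mN/s⌋; in particular ∏_{j=0}^{s−1} (u − Φ((t+2πj)/s)) = Σ_{m=0}^{s} (−1)^m e_m(t) u^{s−m}, where each coefficient e_m is a trigonometric polynomial of degree at most ⌊mN/s⌋. -/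
/-!
Put `G(τ) = ∑_A ∏_{j ∈ A} Φ(τ + 2πj/s)`, so that `e_m(t) = G(t/s)` and `G` is a trigonometric
polynomial of degree at most `mN`. Moving `t` to `t + 2π` permutes the values `Φ((t + 2πj)/s)`
cyclically, so `e_m` is `2π`-periodic and equals its average `s⁻¹ ∑_{r<s} G((t + 2πr)/s)`.
By orthogonality of the `s`-th roots of unity this average sends `exp(iKτ)` to `exp(i(K/s)t)`
when `s ∣ K` and kills it otherwise, so only frequencies `|k| ≤ mN/s` survive.
-/

open Finset Complex Real

noncomputable def fourierMode (k : ℤ) (t : ℝ) : ℂ := exp (I * k * t)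

theorem fourierMode_add (a b : ℤ) : fourierMode (a + b) = fourierMode a * fourierMode b := by
  ext t
  simp only [fourierMode, Pi.mul_apply, ← Complex.exp_add]
  push_cast
  ring_nf

theorem fourierMode_comp_add_right (k : ℤ) (a : ℝ) :
    (fun t => fourierMode k (t + a)) = fourierMode k a • fourierMode k := by
  ext t
  simp only [fourierMode, Pi.smul_apply, smul_eq_mul, ← Complex.exp_add]
  push_cast
  ring_nf

theorem fourierMode_zero : fourierMode 0 = 1 := by
  ext t
  simp [fourierMode]

theorem fourierMode_periodic (k : ℤ) : Function.Periodic (fourierMode k) (2 * π) := by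
  intro t
  rw [fourierMode, fourierMode, show I * k * ↑(t + 2 * π) = I * k * t + k * (2 * π * I) by
    push_cast; ring, Complex.exp_add, Complex.exp_int_mul_two_pi_mul_I, mul_one]

def trigPolyDegreeLE (M : ℕ) : Submodule ℂ (ℝ → ℂ) :=
  Submodule.span ℂ (fourierMode '' ↑(Icc (-(M : ℤ)) M))

theorem mem_trigPolyDegreeLE_iff {M : ℕ} {f : ℝ → ℂ} :
    f ∈ trigPolyDegreeLE M ↔
      ∃ d : ℤ → ℂ, ∀ t, f t = ∑ k ∈ Icc (-(M : ℤ)) M, d k * exp (I * k * t) := by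
  rw [trigPolyDegreeLE, Submodule.mem_span_image_finset_iff_exists_fun']
  simp only [funext_iff, Finset.sum_apply, Pi.smul_apply, smul_eq_mul, fourierMode, eq_comm]

theorem fourierMode_mem_trigPolyDegreeLE {k : ℤ} {M : ℕ} (hk : k.natAbs ≤ M) :
    fourierMode k ∈ trigPolyDegreeLE M :=
  Submodule.subset_span ⟨k, by simp only [coe_Icc, Set.mem_Icc]; omega, rfl⟩

theorem trigPolyDegreeLE_mul_le (M₁ M₂ : ℕ) :
    trigPolyDegreeLE M₁ * trigPolyDegreeLE M₂ ≤ trigPolyDegreeLE (M₁ + M₂) := by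
  rw [trigPolyDegreeLE, trigPolyDegreeLE, Submodule.span_mul_span]
  apply Submodule.span_mono
  rintro _ ⟨_, ⟨a, ha, rfl⟩, _, ⟨b, hb, rfl⟩, rfl⟩
  simp only [coe_Icc, Set.mem_Icc] at ha hb
  exact ⟨a + b, by simp only [coe_Icc, Set.mem_Icc]; omega, fourierMode_add a b⟩

theorem prod_mem_trigPolyDegreeLE {ι : Type*} {N : ℕ} {A : Finset ι} {f : ι → ℝ → ℂ}
    (hf : ∀ i ∈ A, f i ∈ trigPolyDegreeLE N) : ∏ i ∈ A, f i ∈ trigPolyDegreeLE (#A * N) := by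
  classical
  induction A using Finset.induction_on with
  | empty =>
    rw [prod_empty, card_empty, zero_mul, ← fourierMode_zero]
    exact fourierMode_mem_trigPolyDegreeLE le_rfl
  | insert a A ha ih =>
    rw [prod_insert ha, card_insert_of_notMem ha, add_one_mul, add_comm]
    exact trigPolyDegreeLE_mul_le _ _ <| Submodule.mul_mem_mul (hf a (mem_insert_self a A))
      (ih fun i hi => hf i (mem_insert_of_mem hi))

theorem comp_add_right_mem_trigPolyDegreeLE {M : ℕ} {f : ℝ → ℂ} (hf : f ∈ trigPolyDegreeLE M)
    (a : ℝ) : (fun t => f (t + a)) ∈ trigPolyDegreeLE M := by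
  have : (trigPolyDegreeLE M).map (LinearMap.funLeft ℂ ℂ (· + a)) ≤ trigPolyDegreeLE M := by
    rw [trigPolyDegreeLE, Submodule.map_span_le]
    rintro _ ⟨k, hk, rfl⟩
    rw [LinearMap.funLeft, LinearMap.coe_mk, AddHom.coe_mk, Function.comp_def,
      fourierMode_comp_add_right]
    exact Submodule.smul_mem _ _ (Submodule.subset_span ⟨k, hk, rfl⟩)
  exact this ⟨f, hf, rfl⟩

theorem periodic_of_mem_trigPolyDegreeLE {M : ℕ} {f : ℝ → ℂ} (hf : f ∈ trigPolyDegreeLE M) :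
    Function.Periodic f (2 * π) := by
  obtain ⟨d, hd⟩ := mem_trigPolyDegreeLE_iff.mp hf
  intro t
  simp only [hd]
  exact sum_congr rfl fun k _ => congrArg (d k * ·) (fourierMode_periodic k t)

noncomputable def shiftAverage (s : ℕ) : (ℝ → ℂ) →ₗ[ℂ] ℝ → ℂ :=
  (s : ℂ)⁻¹ • ∑ r ∈ range s, LinearMap.funLeft ℂ ℂ fun t => (t + 2 * π * r) / s

theorem shiftAverage_apply (s : ℕ) (f : ℝ → ℂ) (t : ℝ) :
    shiftAverage s f t = (s : ℂ)⁻¹ * ∑ r ∈ range s, f ((t + 2 * π * r) / s) := by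
  simp [shiftAverage, LinearMap.funLeft_apply]

theorem shiftAverage_fourierMode {s : ℕ} (hs : s ≠ 0) (K : ℤ) :
    shiftAverage s (fourierMode K) = if (s : ℤ) ∣ K then fourierMode (K / s) else 0 := by
  set ζ := exp (2 * π * I / s) with hζ_def
  have hζ : IsPrimitiveRoot ζ s := Complex.isPrimitiveRoot_exp s hs
  have hterm (t : ℝ) (r : ℕ) :
      fourierMode K ((t + 2 * π * r) / s) = fourierMode K (t / s) * (ζ ^ K) ^ r := by
    rw [fourierMode, fourierMode, hζ_def, ← Complex.exp_int_mul, ← Complex.exp_nat_mul,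
      ← Complex.exp_add]
    congr 1
    push_cast
    ring
  ext t
  simp only [shiftAverage_apply, hterm, ← mul_sum]
  split_ifs with hK
  · obtain ⟨k, rfl⟩ := hK
    have hs' : (s : ℂ) ≠ 0 := Nat.cast_ne_zero.mpr hs
    rw [zpow_mul, zpow_natCast, hζ.pow_eq_one, one_zpow]
    simp only [one_pow, sum_const, card_range, nsmul_eq_mul, mul_one]
    rw [Int.mul_ediv_cancel_left _ (Int.natCast_ne_zero.mpr hs), fourierMode, fourierMode]
    push_cast
    field_simp
  · have hw : ζ ^ K ≠ 1 := fun h => hK ((hζ.zpow_eq_one_iff_dvd K).mp h)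
    have hws : (ζ ^ K) ^ s = 1 := by
      rw [← zpow_natCast, ← zpow_mul, mul_comm K, zpow_mul, zpow_natCast, hζ.pow_eq_one, one_zpow]
    rw [geom_sum_eq hw, hws, sub_self, zero_div, mul_zero, mul_zero, Pi.zero_apply]

theorem map_shiftAverage_trigPolyDegreeLE_le {s : ℕ} (hs : s ≠ 0) (M : ℕ) :
    (trigPolyDegreeLE M).map (shiftAverage s) ≤ trigPolyDegreeLE (M / s) := by
  rw [trigPolyDegreeLE, Submodule.map_span_le]
  rintro _ ⟨K, hK, rfl⟩
  rw [shiftAverage_fourierMode hs]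
  split_ifs with hdvd
  · obtain ⟨k, rfl⟩ := hdvd
    rw [Int.mul_ediv_cancel_left _ (Int.natCast_ne_zero.mpr hs)]
    simp only [coe_Icc, Set.mem_Icc] at hK
    refine fourierMode_mem_trigPolyDegreeLE ((Nat.le_div_iff_mul_le (Nat.pos_of_ne_zero hs)).mpr ?_)
    have : (s * k).natAbs ≤ M := by omega
    rw [Int.natAbs_mul, Int.natAbs_natCast] at this
    linarith
  · exact Submodule.zero_mem _

theorem shiftAverage_comp_mul {s : ℕ} (hs : s ≠ 0) {f : ℝ → ℂ} (hf : Function.Periodic f (2 * π)) :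
    shiftAverage s (fun τ => f (s * τ)) = f := by
  have hs' : (s : ℝ) ≠ 0 := Nat.cast_ne_zero.mpr hs
  ext t
  have hshift : ∀ r : ℕ, f (s * ((t + 2 * π * r) / s)) = f t := fun r => by
    rw [mul_div_cancel₀ _ hs', mul_comm, ← nsmul_eq_mul]
    exact hf.nsmul r t
  simp only [shiftAverage_apply, hshift, sum_const, card_range, nsmul_eq_mul]
  field_simp

theorem Multiset.map_range_add_one_of_eq {α : Type*} {f : ℕ → α} {n : ℕ} (h : f n = f 0) :
    (Multiset.range n).map (fun j => f (j + 1)) = (Multiset.range n).map f := by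
  rw [← Multiset.cons_inj_right (f 0)]
  calc f 0 ::ₘ (Multiset.range n).map (fun j => f (j + 1))
      = (Multiset.range (n + 1)).map f := by
        simp [Multiset.range, List.range_succ_eq_map, Function.comp_def]
    _ = f 0 ::ₘ (Multiset.range n).map f := by
        rw [Multiset.range_succ, Multiset.map_cons, h]

theorem Multiset.prod_map_sub_eq_sum_esymm {R : Type*} [CommRing R] (s : Multiset R) (u : R) :
    (s.map (u - ·)).prod =
      ∑ j ∈ Finset.range (Multiset.card s + 1),
        (-1) ^ j * s.esymm j * u ^ (Multiset.card s - j) := by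
  have := congrArg (Polynomial.eval u) (Multiset.prod_X_sub_X_eq_sum_esymm s)
  simpa [Polynomial.eval_multiset_prod, Polynomial.eval_finsetSum, Multiset.map_map,
    Function.comp_def, mul_assoc] using this

noncomputable def shiftedValues (Φ : ℝ → ℂ) (s : ℕ) (t : ℝ) : Multiset ℂ :=
  (range s).val.map fun j : ℕ => Φ ((t + 2 * π * j) / s)

theorem shiftedValues_add_two_pi {Φ : ℝ → ℂ} (hΦ : Function.Periodic Φ (2 * π)) (s : ℕ)
    (t : ℝ) : shiftedValues Φ s (t + 2 * π) = shiftedValues Φ s t := by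
  obtain rfl | hs := eq_or_ne s 0
  · rfl
  have hwrap : Φ ((t + 2 * π * s) / s) = Φ ((t + 2 * π * (0 : ℕ)) / s) := by
    rw [add_div, mul_div_cancel_right₀ _ (Nat.cast_ne_zero.mpr hs), hΦ, Nat.cast_zero, mul_zero,
      add_zero]
  rw [shiftedValues, shiftedValues, range_val,
    ← Multiset.map_range_add_one_of_eq (f := fun j : ℕ => Φ ((t + 2 * π * j) / s)) hwrap]
  congr with j
  push_cast
  ring_nf

theorem esymm_shiftedValues_mem_trigPolyDegreeLE {Φ : ℝ → ℂ} {N s : ℕ} (hs : s ≠ 0)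
    (hΦ : Φ ∈ trigPolyDegreeLE N) (m : ℕ) :
    (fun t => (shiftedValues Φ s t).esymm m) ∈ trigPolyDegreeLE (m * N / s) := by
  have hper : Function.Periodic (fun t => (shiftedValues Φ s t).esymm m) (2 * π) := fun t =>
    congrArg (Multiset.esymm · m)
      (shiftedValues_add_two_pi (periodic_of_mem_trigPolyDegreeLE hΦ) s t)
  rw [← shiftAverage_comp_mul hs hper]
  refine map_shiftAverage_trigPolyDegreeLE_le hs _ ⟨_, ?_, rfl⟩
  have hexpand : (fun τ => (shiftedValues Φ s (s * τ)).esymm m) =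
      ∑ A ∈ powersetCard m (range s), ∏ j ∈ A, fun τ => Φ (τ + 2 * π * j / s) := by
    ext τ
    simp only [shiftedValues, esymm_map_val, Finset.sum_apply, Finset.prod_apply, add_div,
      mul_div_cancel_left₀ _ (Nat.cast_ne_zero.mpr hs : (s : ℝ) ≠ 0)]
  rw [hexpand]
  refine Submodule.sum_mem _ fun A hA => ?_
  rw [← (mem_powersetCard.mp hA).2]
  exact prod_mem_trigPolyDegreeLE fun j _ => comp_add_right_mem_trigPolyDegreeLE hΦ _

/-- Let `Φ` be a complex trigonometric polynomial of degree at most `N`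
and let `e_m(t)` be the `m`-th elementary symmetric polynomial of the `s` values
`Φ((t+2πj)/s)`, `j = 0, …, s−1`. Then each `e_m` is a complex trigonometric polynomial
of degree at most `⌊mN/s⌋`, and
`∏_{j=0}^{s−1} (u − Φ((t+2πj)/s)) = ∑_{m=0}^{s} (−1)^m e_m(t) u^{s−m}`. -/
theorem esymm_of_shifted_trigPoly (s : ℕ) (hs : 1 ≤ s) (N : ℕ) (Φ : ℝ → ℂ) (c : ℤ → ℂ)
    (hΦ : ∀ t : ℝ, Φ t = ∑ k ∈ Finset.Icc (-(N : ℤ)) (N : ℤ),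
      c k * Complex.exp (Complex.I * (k : ℂ) * (t : ℂ)))
    (e : ℕ → ℝ → ℂ)
    (he : ∀ (m : ℕ) (t : ℝ), e m t =
      ∑ A ∈ Finset.powersetCard m (Finset.range s),
        ∏ j ∈ A, Φ ((t + 2 * Real.pi * (j : ℝ)) / (s : ℝ))) :
    (∀ m ≤ s, ∃ d : ℤ → ℂ, ∀ t : ℝ, e m t =
      ∑ k ∈ Finset.Icc (-(((m * N) / s : ℕ) : ℤ)) (((m * N) / s : ℕ) : ℤ),
        d k * Complex.exp (Complex.I * (k : ℂ) * (t : ℂ))) ∧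
    (∀ (u : ℂ) (t : ℝ),
      ∏ j ∈ Finset.range s, (u - Φ ((t + 2 * Real.pi * (j : ℝ)) / (s : ℝ))) =
      ∑ m ∈ Finset.range (s + 1), (-1 : ℂ) ^ m * e m t * u ^ (s - m)) := by
  have he_esymm (m : ℕ) (t : ℝ) : e m t = (shiftedValues Φ s t).esymm m := by
    rw [he, shiftedValues, esymm_map_val]
  refine ⟨fun m _ => ?_, fun u t => ?_⟩
  · have hΦ_mem : Φ ∈ trigPolyDegreeLE N := mem_trigPolyDegreeLE_iff.mpr ⟨c, hΦ⟩
    simp only [he_esymm, ← mem_trigPolyDegreeLE_iff]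
    exact esymm_shiftedValues_mem_trigPolyDegreeLE (by omega) hΦ_mem m
  · have hvieta := Multiset.prod_map_sub_eq_sum_esymm (shiftedValues Φ s t) u
    rw [shiftedValues, Multiset.map_map, Multiset.card_map, card_val, card_range,
      ← prod_eq_multiset_prod] at hvieta
    simpa only [he_esymm, shiftedValues, Function.comp_apply] using hvieta
end

section
/- Let I be a finite nonempty index set; for each C ∈ I let s_C ≥ 1 be an integer, let f_C : ℝ³ → ℂ be a map whose real and imaginary parts are polynomial functions of total degree at most d_C, and let F_C, G_C, H_C : ℝ → ℝ and R_C : ℝ → ℝ be real trigonometric polynomials with R_C(τ) > 0 for all τ; let λ > 0. For τ_j := (t + 2π(j−1))/s_C define g_λ(x,y,z,t) = ∏_{C∈I} ∏_{j=1}^{s_C} R_C(τ_j)^{d_C} · f_C( x/(λ R_C(τ_j)) − F_C(τ_j)/R_C(τ_j), y/(λ R_C(τ_j)) − G_C(τ_j)/R_C(τ_j), z/λ − H_C(τ_j) ). Then there exists a polynomial p ∈ ℂ[X, Y, Z, V, W] such that for all x, y, z, t ∈ ℝ: g_λ(x, y, z, t) = p(x, y, z, exp(i t), exp(−i t)). 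-/
open Finset Complex Real

/-- A real trigonometric polynomial:
`T(t) = a₀ + ∑_{k=1}^{N} (a_k cos(kt) + b_k sin(kt))`. -/
def IsRealTrigPoly (T : ℝ → ℝ) : Prop :=
  ∃ (N : ℕ) (a b : ℕ → ℝ), ∀ t : ℝ,
    T t = a 0 + ∑ k ∈ Finset.Icc 1 N, (a k * Real.cos (k * t) + b k * Real.sin (k * t))

/-!
With `τ_j = (t + 2πj)/s`, each factor is a polynomial in `x, y, z, exp (± i τ_j)`: trigonometric
polynomials are polynomials in `exp (± i τ)`, and since `R_C` never vanishes, the factor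
`R_C ^ d_C` clears the denominators of `f_C` (homogenisation). As
`exp (i τ_j) = exp (2πij/s) exp (it/s)`, the product over `j` is a polynomial in
`x, y, z, exp (± it/s)`. Replacing `t` by `t + 2π` permutes the `τ_j` cyclically modulo `2π`, so
the product is `2π`-periodic in `t`; averaging over the shifts `t ↦ t + 2πr`, `r < s`, kills every
monomial `exp (ikt/s)` with `s ∤ k` and leaves a polynomial in `x, y, z, exp (± it)`.
-/

open MvPolynomial

theorem IsPrimitiveRoot.geom_sum_zpow {K : Type*} [Field K] {ζ : K} {n : ℕ}
    (hζ : IsPrimitiveRoot ζ n) (k : ℤ) :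
    ∑ r ∈ range n, (ζ ^ k) ^ r = if (n : ℤ) ∣ k then (n : K) else 0 := by
  split_ifs with hk
  · simp [(hζ.zpow_eq_one_iff_dvd k).2 hk]
  · have hpow : (ζ ^ k) ^ n = 1 := by
      rw [← zpow_natCast, ← zpow_mul, mul_comm, zpow_mul, zpow_natCast, hζ.pow_eq_one, one_zpow]
    rw [geom_sum_eq (mt (hζ.zpow_eq_one_iff_dvd k).1 hk), hpow, sub_self, zero_div]

theorem Finset.prod_range_shift_of_eq {M : Type*} [CommMonoid M] (a : ℕ → M) {n : ℕ}
    (h : a n = a 0) : ∏ j ∈ range n, a (j + 1) = ∏ j ∈ range n, a j := by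
  cases n with
  | zero => simp
  | succ n => rw [prod_range_succ, h, prod_range_succ' a]

theorem MvPolynomial.pow_mul_eval_div {σ K : Type*} [Fintype σ] [Field K]
    {P : MvPolynomial σ K} {d : ℕ} (hP : P.totalDegree ≤ d) (u : σ → K) {r : K} (hr : r ≠ 0) :
    r ^ d * eval (fun i => u i / r) P =
      ∑ m ∈ P.support, coeff m P * (∏ i, u i ^ m i) * r ^ (d - ∑ i, m i) := by
  rw [eval_eq', mul_sum]
  refine sum_congr rfl fun m hm => ?_
  have hdeg : ∑ i, m i ≤ d := by
    simpa [Finsupp.sum_fintype] using (le_totalDegree hm).trans hP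
  rw [← pow_sub_mul_pow r hdeg]
  simp only [div_pow, prod_div_distrib, prod_pow_eq_pow_sum]
  field_simp

noncomputable section

def expPolyEval (s : ℕ) (x y z t : ℝ) : Fin 5 → ℂ :=
  ![x, y, z, exp (I * t / s), exp (-(I * t / s))]

def expPolySubalgebra (s : ℕ) : Subalgebra ℂ (ℝ → ℝ → ℝ → ℝ → ℂ) where
  carrier :=
    {g | ∃ p : MvPolynomial (Fin 5) ℂ, ∀ x y z t, g x y z t = eval (expPolyEval s x y z t) p}
  mul_mem' := by
    rintro _ _ ⟨p, hp⟩ ⟨q, hq⟩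
    exact ⟨p * q, by simp [hp, hq]⟩
  add_mem' := by
    rintro _ _ ⟨p, hp⟩ ⟨q, hq⟩
    exact ⟨p + q, by simp [hp, hq]⟩
  algebraMap_mem' c := ⟨C c, by simp⟩

@[simp]
theorem expPolyEval_one (x y z t : ℝ) :
    expPolyEval 1 x y z t = ![(x : ℂ), y, z, exp (I * t), exp (-(I * t))] := by
  simp [expPolyEval]

namespace expPolySubalgebra

variable {s : ℕ} {g h : ℝ → ℝ → ℝ → ℝ → ℂ}

theorem mem_one_iff : g ∈ expPolySubalgebra 1 ↔ ∃ p : MvPolynomial (Fin 5) ℂ, ∀ x y z t,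
    g x y z t = eval ![(x : ℂ), y, z, exp (I * t), exp (-(I * t))] p := by
  simp [expPolySubalgebra]

theorem coord_mem (i : Fin 5) :
    (fun x y z t => expPolyEval s x y z t i) ∈ expPolySubalgebra s :=
  ⟨X i, by simp⟩

theorem const_mem (c : ℂ) : (fun _ _ _ _ => c) ∈ expPolySubalgebra s :=
  (expPolySubalgebra s).algebraMap_mem c

theorem sum_mem' {κ : Type*} {S : Finset κ} {g : κ → ℝ → ℝ → ℝ → ℝ → ℂ}
    (hg : ∀ m ∈ S, g m ∈ expPolySubalgebra s) :
    (fun x y z t => ∑ m ∈ S, g m x y z t) ∈ expPolySubalgebra s := by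
  convert Subalgebra.sum_mem _ hg
  simp [Finset.sum_apply]

theorem prod_mem' {κ : Type*} {S : Finset κ} {g : κ → ℝ → ℝ → ℝ → ℝ → ℂ}
    (hg : ∀ m ∈ S, g m ∈ expPolySubalgebra s) :
    (fun x y z t => ∏ m ∈ S, g m x y z t) ∈ expPolySubalgebra s := by
  convert Subalgebra.prod_mem _ hg
  simp [Finset.prod_apply]

theorem eval_mem {n : ℕ} {φ : Fin n → ℝ → ℝ → ℝ → ℝ → ℂ} (hφ : ∀ i, φ i ∈ expPolySubalgebra s)
    (p : MvPolynomial (Fin n) ℂ) :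
    (fun x y z t => eval (fun i => φ i x y z t) p) ∈ expPolySubalgebra s := by
  induction p using MvPolynomial.induction_on with
  | C a => simpa using const_mem (s := s) a
  | add p q hp hq => simp only [map_add]; exact add_mem hp hq
  | mul_X p i hp => simp only [map_mul, eval_X]; exact mul_mem hp (hφ i)

theorem exp_int_mul_mem (k : ℤ) :
    (fun (_ _ _ t : ℝ) => exp (k * (I * t))) ∈ expPolySubalgebra 1 := by
  obtain ⟨n, rfl | rfl⟩ := Int.eq_nat_or_neg k
  · exact ⟨X 3 ^ n, by simp [expPolyEval, ← Complex.exp_nat_mul]⟩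
  · exact ⟨X 4 ^ n, by simp [expPolyEval, ← Complex.exp_nat_mul, ← mul_neg]⟩

theorem cos_nat_mul_mem (k : ℕ) :
    (fun (_ _ _ t : ℝ) => ((Real.cos (k * t) : ℝ) : ℂ)) ∈ expPolySubalgebra 1 := by
  have h : (fun (_ _ _ t : ℝ) => ((Real.cos (k * t) : ℝ) : ℂ)) = fun (_ _ _ t : ℝ) =>
      2⁻¹ * (exp ((k : ℤ) * (I * t)) + exp ((-k : ℤ) * (I * t))) := by
    ext; simp [Complex.cos]; ring_nf
  rw [h]
  exact mul_mem (const_mem _) (add_mem (exp_int_mul_mem _) (exp_int_mul_mem _))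

theorem sin_nat_mul_mem (k : ℕ) :
    (fun (_ _ _ t : ℝ) => ((Real.sin (k * t) : ℝ) : ℂ)) ∈ expPolySubalgebra 1 := by
  have h : (fun (_ _ _ t : ℝ) => ((Real.sin (k * t) : ℝ) : ℂ)) = fun (_ _ _ t : ℝ) =>
      I / 2 * (exp ((-k : ℤ) * (I * t)) - exp ((k : ℤ) * (I * t))) := by
    ext; simp [Complex.sin]; ring_nf
  rw [h]
  exact mul_mem (const_mem _) (sub_mem (exp_int_mul_mem _) (exp_int_mul_mem _))

theorem ofReal_mem_of_isRealTrigPoly {T : ℝ → ℝ} (hT : IsRealTrigPoly T) :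
    (fun (_ _ _ t : ℝ) => (T t : ℂ)) ∈ expPolySubalgebra 1 := by
  obtain ⟨N, a, b, hT⟩ := hT
  simp only [hT, ofReal_add, ofReal_sum, ofReal_mul]
  exact add_mem (const_mem _) (sum_mem' fun k _ =>
    add_mem (mul_mem (const_mem _) (cos_nat_mul_mem k))
      (mul_mem (const_mem _) (sin_nat_mul_mem k)))

theorem periodic_of_mem_one (hg : g ∈ expPolySubalgebra 1) (x y z : ℝ) :
    Function.Periodic (g x y z) (2 * π) := by
  obtain ⟨p, hp⟩ := hg
  intro t
  have h : I * ((t + 2 * π : ℝ) : ℂ) = I * t + 2 * π * I := by push_cast; ring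
  simp only [hp, expPolyEval_one, h, neg_add, Complex.exp_add, Complex.exp_neg,
    Complex.exp_two_pi_mul_I, inv_one, mul_one]

theorem shift_div_mem (hh : h ∈ expPolySubalgebra 1) (s j : ℕ) :
    (fun x y z t => h x y z ((t + 2 * π * j) / s)) ∈ expPolySubalgebra s := by
  obtain ⟨p, hp⟩ := hh
  simp only [hp]
  refine eval_mem (fun i => ?_) p
  set c := exp (2 * π * I * j / s)
  have hcoord : (fun x y z t => expPolyEval 1 x y z ((t + 2 * π * j) / s) i) =
      fun x y z t => ![1, 1, 1, c, c⁻¹] i * expPolyEval s x y z t i := by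
    ext x y z t
    fin_cases i <;> simp [expPolyEval, c, ← Complex.exp_neg, ← Complex.exp_add] <;> ring_nf
  rw [hcoord]
  exact mul_mem (const_mem _) (coord_mem i)

theorem prod_pow_expPolyEval_add_two_pi_mul (m : Fin 5 → ℕ) (x y z t : ℝ) (r : ℕ) :
    ∏ i, expPolyEval s x y z (t + 2 * π * r) i ^ m i =
      (∏ i, expPolyEval s x y z t i ^ m i) * (exp (2 * π * I / s) ^ ((m 3 : ℤ) - m 4)) ^ r := by
  have h : exp (I * ((t + 2 * π * r : ℝ) : ℂ) / s) ^ m 3 *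
      exp (-(I * ((t + 2 * π * r : ℝ) : ℂ) / s)) ^ m 4 =
      exp (I * t / s) ^ m 3 * exp (-(I * t / s)) ^ m 4 *
        (exp (2 * π * I / s) ^ ((m 3 : ℤ) - m 4)) ^ r := by
    simp only [← Complex.exp_nat_mul, ← Complex.exp_int_mul, ← Complex.exp_add]
    congr 1
    push_cast
    ring
  simp only [Fin.prod_univ_five, expPolyEval, Matrix.cons_val_zero, Matrix.cons_val_one,
    Matrix.cons_val_two, Matrix.cons_val_three, Matrix.cons_val_four, Matrix.head_cons,
    Matrix.tail_cons]
  linear_combination (x : ℂ) ^ m 0 * (y : ℂ) ^ m 1 * (z : ℂ) ^ m 2 * h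

theorem sum_range_prod_pow_expPolyEval_add_two_pi_mul (hs : s ≠ 0) (m : Fin 5 → ℕ)
    (x y z t : ℝ) :
    ∑ r ∈ range s, ∏ i, expPolyEval s x y z (t + 2 * π * r) i ^ m i =
      if (s : ℤ) ∣ (m 3 : ℤ) - m 4 then s * ∏ i, expPolyEval s x y z t i ^ m i else 0 := by
  simp only [prod_pow_expPolyEval_add_two_pi_mul, ← mul_sum,
    (Complex.isPrimitiveRoot_exp s hs).geom_sum_zpow]
  split_ifs <;> ring

theorem prod_pow_expPolyEval_mem (hs : s ≠ 0) {m : Fin 5 → ℕ} (hm : (s : ℤ) ∣ (m 3 : ℤ) - m 4) :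
    (fun x y z t => ∏ i, expPolyEval s x y z t i ^ m i) ∈ expPolySubalgebra 1 := by
  obtain ⟨k, hk⟩ := hm
  have h : (fun x y z t => ∏ i, expPolyEval s x y z t i ^ m i) = fun (x y z t : ℝ) =>
      (x : ℂ) ^ m 0 * (y : ℂ) ^ m 1 * (z : ℂ) ^ m 2 * exp (k * (I * t)) := by
    ext x y z t
    have hexp : exp (I * t / s) ^ m 3 * exp (-(I * t / s)) ^ m 4 = exp (k * (I * t)) := by
      simp only [← Complex.exp_nat_mul, ← Complex.exp_add]
      congr 1
      have hk' : (m 3 : ℂ) - m 4 = s * k := by exact_mod_cast hk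
      rw [show (m 3 : ℂ) * (I * t / s) + m 4 * -(I * t / s) = ((m 3 : ℂ) - m 4) / s * (I * t) by
        ring, hk', mul_div_cancel_left₀ _ (Nat.cast_ne_zero.2 hs)]
    simp only [Fin.prod_univ_five, expPolyEval, Matrix.cons_val_zero, Matrix.cons_val_one,
      Matrix.cons_val_two, Matrix.cons_val_three, Matrix.cons_val_four, Matrix.head_cons,
      Matrix.tail_cons, ← hexp]
    ring
  rw [h]
  exact mul_mem (mul_mem (mul_mem (pow_mem (coord_mem 0) _) (pow_mem (coord_mem 1) _))
    (pow_mem (coord_mem 2) _)) (exp_int_mul_mem k)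

theorem mem_one_of_periodic (hs : s ≠ 0) (hg : g ∈ expPolySubalgebra s)
    (hper : ∀ x y z, Function.Periodic (g x y z) (2 * π)) : g ∈ expPolySubalgebra 1 := by
  obtain ⟨p, hp⟩ := hg
  have havg : g = fun x y z t => ∑ m ∈ p.support with (s : ℤ) ∣ (m 3 : ℤ) - m 4,
      coeff m p * ∏ i, expPolyEval s x y z t i ^ m i := by
    ext x y z t
    have hs' : (s : ℂ) ≠ 0 := Nat.cast_ne_zero.2 hs
    have hrep : ∑ r ∈ range s, g x y z (t + 2 * π * r) = s * g x y z t := by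
      simp [mul_comm (2 * π), fun r : ℕ => (hper x y z).nat_mul r t]
    apply mul_left_cancel₀ hs'
    rw [← hrep]
    simp only [hp, eval_eq', sum_filter, mul_sum]
    rw [sum_comm]
    refine sum_congr rfl fun m _ => ?_
    rw [← mul_sum, sum_range_prod_pow_expPolyEval_add_two_pi_mul hs]
    split_ifs <;> ring
  rw [havg]
  exact sum_mem' fun m hm =>
    mul_mem (const_mem _) (prod_pow_expPolyEval_mem hs (mem_filter.1 hm).2)

theorem prod_shift_mem (hh : h ∈ expPolySubalgebra 1) (s : ℕ) :
    (fun x y z t => ∏ j ∈ range s, h x y z ((t + 2 * π * j) / s)) ∈ expPolySubalgebra 1 := by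
  rcases eq_or_ne s 0 with rfl | hs
  · simp only [range_zero, prod_empty]
    exact one_mem _
  refine mem_one_of_periodic hs (prod_mem' fun j _ => shift_div_mem hh s j) fun x y z t => ?_
  have hsucc : ∀ j : ℕ, (t + 2 * π + 2 * π * j) / s = (t + 2 * π * (j + 1 : ℕ)) / s := by
    intro j; push_cast; ring
  have hwrap : (t + 2 * π * s) / s = (t + 2 * π * (0 : ℕ)) / s + 2 * π := by
    field_simp; push_cast; ring
  simp only [hsucc]
  exact prod_range_shift_of_eq (fun j => h x y z ((t + 2 * π * j) / s))
    (by rw [hwrap]; exact periodic_of_mem_one hh x y z _)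

theorem tube_mem {d : ℕ} {P : MvPolynomial (Fin 3) ℝ} (hP : P.totalDegree ≤ d)
    {F G H R : ℝ → ℝ} (hF : IsRealTrigPoly F) (hG : IsRealTrigPoly G) (hH : IsRealTrigPoly H)
    (hR : IsRealTrigPoly R) (hR0 : ∀ τ, R τ ≠ 0) (lam : ℝ) :
    (fun x y z τ => (R τ : ℂ) ^ d * ((eval ![x / (lam * R τ) - F τ / R τ,
      y / (lam * R τ) - G τ / R τ, z / lam - H τ] P : ℝ) : ℂ)) ∈ expPolySubalgebra 1 := by
  let U : Fin 3 → ℝ → ℝ → ℝ → ℝ → ℝ := ![fun x _ _ τ => x * lam⁻¹ - F τ,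
    fun _ y _ τ => y * lam⁻¹ - G τ, fun _ _ z τ => R τ * (z * lam⁻¹ - H τ)]
  have hU : ∀ i, (fun x y z τ => (U i x y z τ : ℂ)) ∈ expPolySubalgebra 1 := by
    intro i
    fin_cases i <;> simp only [U, Fin.zero_eta, Fin.mk_one, Fin.reduceFinMk, Matrix.cons_val,
      ofReal_sub, ofReal_mul, ofReal_inv]
    · exact sub_mem (mul_mem (coord_mem 0) (const_mem _)) (ofReal_mem_of_isRealTrigPoly hF)
    · exact sub_mem (mul_mem (coord_mem 1) (const_mem _)) (ofReal_mem_of_isRealTrigPoly hG)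
    · exact mul_mem (ofReal_mem_of_isRealTrigPoly hR)
        (sub_mem (mul_mem (coord_mem 2) (const_mem _)) (ofReal_mem_of_isRealTrigPoly hH))
  have hhom : ∀ x y z τ, R τ ^ d * eval ![x / (lam * R τ) - F τ / R τ,
      y / (lam * R τ) - G τ / R τ, z / lam - H τ] P =
      ∑ m ∈ P.support, coeff m P * (∏ i, U i x y z τ ^ m i) * R τ ^ (d - ∑ i, m i) := by
    intro x y z τ
    have hv : ![x / (lam * R τ) - F τ / R τ, y / (lam * R τ) - G τ / R τ, z / lam - H τ] =
        fun i => U i x y z τ / R τ := by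
      have hRτ := hR0 τ
      funext i
      fin_cases i <;> simp [U] <;> field_simp
    rw [hv, pow_mul_eval_div hP _ (hR0 τ)]
  have h : (fun x y z τ => (R τ : ℂ) ^ d * ((eval ![x / (lam * R τ) - F τ / R τ,
      y / (lam * R τ) - G τ / R τ, z / lam - H τ] P : ℝ) : ℂ)) = fun x y z τ =>
      ∑ m ∈ P.support, ((coeff m P : ℝ) : ℂ) * (∏ i, (U i x y z τ : ℂ) ^ m i) *
        (R τ : ℂ) ^ (d - ∑ i, m i) := by
    ext x y z τ
    exact_mod_cast congrArg (fun r : ℝ => (r : ℂ)) (hhom x y z τ)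
  rw [h]
  exact sum_mem' fun m _ => mul_mem (mul_mem (const_mem _)
    (prod_mem' fun i _ => pow_mem (hU i) _)) (pow_mem (ofReal_mem_of_isRealTrigPoly hR) _)

end expPolySubalgebra

end

open expPolySubalgebra

theorem motion_group_product_is_polynomial_general {ι : Type*} [Fintype ι]
    (s : ι → ℕ)
    (d : ι → ℕ) (f : ι → ℝ → ℝ → ℝ → ℂ)
    (A B : ι → MvPolynomial (Fin 3) ℝ)
    (hA : ∀ C, (A C).totalDegree ≤ d C) (hB : ∀ C, (B C).totalDegree ≤ d C)
    (hf : ∀ C x y z, f C x y z =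
      (MvPolynomial.eval ![x, y, z] (A C) : ℂ) + Complex.I * (MvPolynomial.eval ![x, y, z] (B C) : ℂ))
    (F G H R : ι → ℝ → ℝ)
    (hF : ∀ C, IsRealTrigPoly (F C)) (hG : ∀ C, IsRealTrigPoly (G C))
    (hH : ∀ C, IsRealTrigPoly (H C)) (hR : ∀ C, IsRealTrigPoly (R C))
    (hRpos : ∀ C τ, 0 < R C τ)
    (lam : ℝ) :
    ∃ p : MvPolynomial (Fin 5) ℂ,
      ∀ (x y z t : ℝ),
        (∏ C, ∏ j ∈ Finset.range (s C),
          ((R C ((t + 2 * Real.pi * (j : ℝ)) / (s C : ℝ)) : ℂ) ^ (d C) *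
            f C
              (x / (lam * R C ((t + 2 * Real.pi * (j : ℝ)) / (s C : ℝ)))
                - F C ((t + 2 * Real.pi * (j : ℝ)) / (s C : ℝ))
                  / R C ((t + 2 * Real.pi * (j : ℝ)) / (s C : ℝ)))
              (y / (lam * R C ((t + 2 * Real.pi * (j : ℝ)) / (s C : ℝ)))
                - G C ((t + 2 * Real.pi * (j : ℝ)) / (s C : ℝ))
                  / R C ((t + 2 * Real.pi * (j : ℝ)) / (s C : ℝ)))
              (z / lam - H C ((t + 2 * Real.pi * (j : ℝ)) / (s C : ℝ))))) =
        MvPolynomial.eval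
          ![(x : ℂ), (y : ℂ), (z : ℂ), Complex.exp (Complex.I * (t : ℂ)),
            Complex.exp (-(Complex.I * (t : ℂ)))] p := by
  have hterm : ∀ C, (fun x y z τ => (R C τ : ℂ) ^ d C * f C (x / (lam * R C τ) - F C τ / R C τ)
      (y / (lam * R C τ) - G C τ / R C τ) (z / lam - H C τ)) ∈ expPolySubalgebra 1 := by
    intro C
    have hR0 : ∀ τ, R C τ ≠ 0 := fun τ => (hRpos C τ).ne'
    simp only [hf, mul_add, mul_left_comm _ I]
    exact add_mem (tube_mem (hA C) (hF C) (hG C) (hH C) (hR C) hR0 lam)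
      (mul_mem (const_mem I) (tube_mem (hB C) (hF C) (hG C) (hH C) (hR C) hR0 lam))
  exact mem_one_iff.1 (prod_mem' fun C _ => prod_shift_mem (hterm C) (s C))

/-- algebraic kernel of Theorem 3.10 of the paper. Inserting
polynomial maps `f_C : ℝ³ → ℂ` of degree at most `d_C` into the tubes of a loop braid,
the product
`g_λ = ∏_C ∏_j R_C(τ_j)^{d_C} · f_C(x/(λR_C(τ_j)) − F_C(τ_j)/R_C(τ_j), y/(λR_C(τ_j)) − G_C(τ_j)/R_C(τ_j), z/λ − H_C(τ_j))`
is a polynomial in `x`, `y`, `z`, `exp(it)` and `exp(−it)`. -/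
theorem motion_group_product_is_polynomial {ι : Type*} [Fintype ι] [Nonempty ι]
    (s : ι → ℕ) (hs : ∀ C, 1 ≤ s C)
    (d : ι → ℕ) (f : ι → ℝ → ℝ → ℝ → ℂ)
    (A B : ι → MvPolynomial (Fin 3) ℝ)
    (hA : ∀ C, (A C).totalDegree ≤ d C) (hB : ∀ C, (B C).totalDegree ≤ d C)
    (hf : ∀ C x y z, f C x y z =
      (MvPolynomial.eval ![x, y, z] (A C) : ℂ) + Complex.I * (MvPolynomial.eval ![x, y, z] (B C) : ℂ))
    (F G H R : ι → ℝ → ℝ)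
    (hF : ∀ C, IsRealTrigPoly (F C)) (hG : ∀ C, IsRealTrigPoly (G C))
    (hH : ∀ C, IsRealTrigPoly (H C)) (hR : ∀ C, IsRealTrigPoly (R C))
    (hRpos : ∀ C τ, 0 < R C τ)
    (lam : ℝ) (hlam : 0 < lam) :
    ∃ p : MvPolynomial (Fin 5) ℂ,
      ∀ (x y z t : ℝ),
        (∏ C, ∏ j ∈ Finset.range (s C),
          ((R C ((t + 2 * Real.pi * (j : ℝ)) / (s C : ℝ)) : ℂ) ^ (d C) *
            f C
              (x / (lam * R C ((t + 2 * Real.pi * (j : ℝ)) / (s C : ℝ)))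
                - F C ((t + 2 * Real.pi * (j : ℝ)) / (s C : ℝ))
                  / R C ((t + 2 * Real.pi * (j : ℝ)) / (s C : ℝ)))
              (y / (lam * R C ((t + 2 * Real.pi * (j : ℝ)) / (s C : ℝ)))
                - G C ((t + 2 * Real.pi * (j : ℝ)) / (s C : ℝ))
                  / R C ((t + 2 * Real.pi * (j : ℝ)) / (s C : ℝ)))
              (z / lam - H C ((t + 2 * Real.pi * (j : ℝ)) / (s C : ℝ))))) =
        MvPolynomial.eval
          ![(x : ℂ), (y : ℂ), (z : ℂ), Complex.exp (Complex.I * (t : ℂ)),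
            Complex.exp (-(Complex.I * (t : ℂ)))] p :=
  motion_group_product_is_polynomial_general s d f A B hA hB hf F G H R hF hG hH hR hRpos lam
end
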